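/- Let (A_α)_{α<ω₁} be a continuous nested transfinite sequence of separable C*-algebras with union A, and let f be a pure state on A. Then the set {α < ω₁ : f restricted to A_α is a pure state on A_α} is unbounded in ω₁. -/

import Mathlib

open scoped ComplexOrder
open Filter Topology

section
variable {A : Type*} [NonUnitalNormedRing A] [StarRing A] [CStarRing A]
  [NormedSpace ℂ A] [IsScalarTower ℂ A A] [SMulCommClass ℂ A A] [StarModule ℂ A]
  [CompleteSpace A]

/-- A state on a (possibly nonunital) C*-algebra: a positive linear functional
of norm one. -/
def IsState {C : Type*} [NonUnitalNormedRing C] [StarRing C] [Module ℂ C]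
    (f : C → ℂ) : Prop :=
  IsLinearMap ℂ f ∧ (∀ x, 0 ≤ f (star x * x)) ∧
    (∀ x, ‖f x‖ ≤ ‖x‖) ∧ ∀ ε : ℝ, 0 < ε → ∃ x, ‖x‖ ≤ 1 ∧ 1 - ε < ‖f x‖

/-- A pure state: an extreme point of the state space. -/
def IsPureState {C : Type*} [NonUnitalNormedRing C] [StarRing C] [Module ℂ C]
    (f : C → ℂ) : Prop :=
  IsState f ∧ ∀ g h : C → ℂ, IsState g → IsState h →
    (∀ x, f x = (g x + h x) / 2) → g = h

lemma aux_isClosed_nonneg : IsClosed {z : ℂ | 0 ≤ z} := by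
  have : {z : ℂ | 0 ≤ z} = {z : ℂ | 0 ≤ z.re} ∩ {z : ℂ | 0 = z.im} := by
    ext z; simp [Complex.le_def]
  rw [this]
  exact (isClosed_le continuous_const Complex.continuous_re).inter
    (isClosed_eq continuous_const Complex.continuous_im)

universe v
lemma aux_sup_lt {ι : Type} [Countable ι] (g : ι → Ordinal.{v})
    (h : ∀ i, g i < (Cardinal.aleph 1).ord) :
    ∃ B : Ordinal.{v}, B < (Cardinal.aleph 1).ord ∧ (∀ i, g i ≤ B) ∧
      ∀ δ, δ < B → ∃ i, δ < g i := by
  refine ⟨⨆ i, g i, ?_, Ordinal.le_iSup g, fun δ hδ => Ordinal.lt_iSup_iff.mp hδ⟩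
  apply Ordinal.iSup_lt_ord_lift ?_ h
  rw [Cardinal.isRegular_aleph_one.cof_eq]
  calc Cardinal.lift.{v,0} (Cardinal.mk ι)
      ≤ Cardinal.lift.{v,0} Cardinal.aleph0 := Cardinal.lift_le.mpr Cardinal.mk_le_aleph0
    _ = Cardinal.aleph0 := Cardinal.lift_aleph0
    _ < Cardinal.aleph 1 := Cardinal.aleph0_lt_aleph_one

lemma aux_cont {E : Type*} [SeminormedAddCommGroup E] [Module ℂ E] {G : E → ℂ}
    (hlin : IsLinearMap ℂ G) (hc : ∀ x, ‖G x‖ ≤ ‖x‖) : Continuous G := by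
  have : LipschitzWith 1 G := LipschitzWith.of_dist_le_mul (fun a b => by
    rw [dist_eq_norm, dist_eq_norm, ← hlin.map_sub]
    simpa using hc (a - b))
  exact this.continuous

lemma aux_omega1_isLimit : Order.IsSuccLimit ((Cardinal.aleph 1).ord) :=
  Cardinal.isSuccLimit_ord (Cardinal.aleph0_le_aleph 1)

lemma aux_key (𝒜 : Ordinal → NonUnitalStarSubalgebra ℂ A)
    (hsep : ∀ α, α < (Cardinal.aleph 1).ord → TopologicalSpace.SeparableSpace (𝒜 α))
    (hmono : ∀ β α, β ≤ α → α < (Cardinal.aleph 1).ord → 𝒜 β ≤ 𝒜 α)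
    (hunion : (⋃ α < (Cardinal.aleph 1).ord, (𝒜 α : Set A)) = Set.univ)
    (f : A → ℂ) (hf : IsPureState f) (β : Ordinal) (hβ : β < (Cardinal.aleph 1).ord) :
    ∃ γ, β < γ ∧ γ < (Cardinal.aleph 1).ord ∧
      ∀ G H : A → ℂ, IsLinearMap ℂ G → IsLinearMap ℂ H →
        (∀ x, ‖G x‖ ≤ ‖x‖) → (∀ x, ‖H x‖ ≤ ‖x‖) →
        (∀ x ∈ 𝒜 γ, 0 ≤ G (star x * x)) → (∀ x ∈ 𝒜 γ, 0 ≤ H (star x * x)) →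
        (∀ x ∈ 𝒜 γ, G x + H x = 2 * f x) →
        ∀ x ∈ 𝒜 β, G x = H x := by
  classical
  by_contra hcon
  push_neg at hcon
  have hch : ∀ γ : Ordinal, ∃ P : (A → ℂ) × (A → ℂ),
      β < γ → γ < (Cardinal.aleph 1).ord →
      IsLinearMap ℂ P.1 ∧ IsLinearMap ℂ P.2 ∧ (∀ x, ‖P.1 x‖ ≤ ‖x‖) ∧ (∀ x, ‖P.2 x‖ ≤ ‖x‖) ∧
      (∀ x ∈ 𝒜 γ, 0 ≤ P.1 (star x * x)) ∧ (∀ x ∈ 𝒜 γ, 0 ≤ P.2 (star x * x)) ∧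
      (∀ x ∈ 𝒜 γ, P.1 x + P.2 x = 2 * f x) ∧ ∃ x ∈ 𝒜 β, P.1 x ≠ P.2 x := by
    intro γ
    by_cases h1 : β < γ ∧ γ < (Cardinal.aleph 1).ord
    · obtain ⟨G, H, hb⟩ := hcon γ h1.1 h1.2
      exact ⟨(G, H), fun _ _ => hb⟩
    · exact ⟨(0, 0), fun h2 h3 => absurd ⟨h2, h3⟩ h1⟩
  choose GH hGH using hch
  haveI hsepβ := hsep β hβ
  haveI : Nonempty ↥(𝒜 β) := ⟨⟨0, zero_mem _⟩⟩
  set xs : ℕ → A := fun k => ((TopologicalSpace.denseSeq ↥(𝒜 β) k : ↥(𝒜 β)) : A) with hxs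
  have hxs_mem : ∀ k, xs k ∈ 𝒜 β := fun k => (TopologicalSpace.denseSeq ↥(𝒜 β) k).2
  have hxs_dense : DenseRange (TopologicalSpace.denseSeq ↥(𝒜 β)) :=
    TopologicalSpace.denseRange_denseSeq ↥(𝒜 β)
  have hwit : ∀ γ : Ordinal, ∃ km : ℕ × ℕ, β < γ → γ < (Cardinal.aleph 1).ord →
      1 / ((km.2 : ℝ) + 1) ≤ ‖(GH γ).1 (xs km.1) - (GH γ).2 (xs km.1)‖ := by
    intro γ
    by_cases h1 : β < γ ∧ γ < (Cardinal.aleph 1).ord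
    · obtain ⟨hG, hH, hGc, hHc, -, -, -, x, hxβ, hne⟩ := hGH γ h1.1 h1.2
      have hk : ∃ k, (GH γ).1 (xs k) ≠ (GH γ).2 (xs k) := by
        by_contra hk
        push_neg at hk
        have hq : (fun Y : ↥(𝒜 β) => (GH γ).1 (Y : A) - (GH γ).2 (Y : A)) = fun _ => 0 := by
          refine Continuous.ext_on hxs_dense ?_ continuous_const ?_
          · exact ((aux_cont hG hGc).comp continuous_subtype_val).sub
              ((aux_cont hH hHc).comp continuous_subtype_val)
          · rintro Y ⟨k, rfl⟩
            simpa [sub_eq_zero] using hk k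
        have h0 := congrFun hq ⟨x, hxβ⟩
        simp only [sub_eq_zero] at h0
        exact hne h0
      obtain ⟨k, hk⟩ := hk
      obtain ⟨m, hm⟩ := exists_nat_one_div_lt (show (0:ℝ) < ‖(GH γ).1 (xs k) - (GH γ).2 (xs k)‖
        from norm_pos_iff.mpr (sub_ne_zero.mpr hk))
      exact ⟨(k, m), fun _ _ => hm.le⟩
    · exact ⟨(0, 0), fun h2 h3 => absurd ⟨h2, h3⟩ h1⟩
  choose km hkm using hwit
  have hpig : ∃ q : ℕ × ℕ, ∀ δ, δ < (Cardinal.aleph 1).ord →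
      ∃ γ, δ < γ ∧ β < γ ∧ γ < (Cardinal.aleph 1).ord ∧ km γ = q := by
    by_contra hp
    push_neg at hp
    choose δf hδf1 hδf2 using hp
    obtain ⟨B, hB, hBle, -⟩ := aux_sup_lt δf hδf1
    have hγ0 : max B β + 1 < (Cardinal.aleph 1).ord := by
      rw [Ordinal.add_one_eq_succ]
      exact aux_omega1_isLimit.succ_lt (max_lt hB hβ)
    have hsucc : max B β < max B β + 1 := by
      rw [Ordinal.add_one_eq_succ]; exact Order.lt_succ _
    exact hδf2 (km (max B β + 1)) (max B β + 1)
      (lt_of_le_of_lt (hBle _) (lt_of_le_of_lt (le_max_left _ _) hsucc))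
      (lt_of_le_of_lt (le_max_right _ _) hsucc) hγ0 rfl
  obtain ⟨p, hS⟩ := hpig
  let T := {γ : Ordinal // β < γ ∧ γ < (Cardinal.aleph 1).ord ∧ km γ = p}
  haveI : Nonempty T := by
    obtain ⟨γ, -, h2, h3, h4⟩ := hS β hβ
    exact ⟨⟨γ, h2, h3, h4⟩⟩
  set U := Ultrafilter.of (atTop : Filter T) with hU
  have hUle : (U : Filter T) ≤ atTop := Ultrafilter.of_le _
  have hprops := fun γ : T => hGH (γ : Ordinal) γ.2.1 γ.2.2.1
  have hgap : ∀ γ : T, 1 / ((p.2 : ℝ) + 1) ≤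
      ‖(GH (γ : Ordinal)).1 (xs p.1) - (GH (γ : Ordinal)).2 (xs p.1)‖ := by
    intro γ
    have h := hkm (γ : Ordinal) γ.2.1 γ.2.2.1
    rwa [γ.2.2.2] at h
  have htail : ∀ γ0, γ0 < (Cardinal.aleph 1).ord →
      ∀ᶠ γ : T in (U : Filter T), γ0 ≤ (γ : Ordinal) := by
    intro γ0 h0
    obtain ⟨γ1, h01, hb1, hw1, hk1⟩ := hS γ0 h0
    have h1 : ∀ᶠ γ : T in atTop, γ0 ≤ (γ : Ordinal) := by
      rw [eventually_atTop]
      exact ⟨⟨γ1, hb1, hw1, hk1⟩, fun b hb => le_trans h01.le (Subtype.coe_le_coe.mpr hb)⟩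
    exact h1.filter_mono hUle
  set K : Set (A → ℂ) := Set.pi Set.univ (fun x : A => Metric.closedBall (0 : ℂ) ‖x‖) with hKdef
  have hKcomp : IsCompact K := isCompact_univ_pi fun x => isCompact_closedBall _ _
  set Ψ : T → (A → ℂ) × (A → ℂ) := fun γ => GH (γ : Ordinal) with hΨ
  have hΨmem : ∀ γ : T, Ψ γ ∈ K ×ˢ K := by
    intro γ
    obtain ⟨-, -, hGc, hHc, -, -, -, -⟩ := hprops γ
    constructor
    · intro x _
      simpa [Metric.mem_closedBall, dist_zero_right] using hGc x
    · intro x _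
      simpa [Metric.mem_closedBall, dist_zero_right] using hHc x
  obtain ⟨GHl, hGHlC, hlim⟩ := (hKcomp.prod hKcomp).ultrafilter_le_nhds (U.map Ψ)
    (by rw [Ultrafilter.coe_map, Filter.le_principal_iff, Filter.mem_map]
        exact Filter.univ_mem' hΨmem)
  have htend : Filter.Tendsto Ψ (U : Filter T) (𝓝 GHl) := by
    rwa [Ultrafilter.coe_map] at hlim
  set G := GHl.1 with hGdef
  set H := GHl.2 with hHdef
  have htG : ∀ x : A, Filter.Tendsto (fun γ : T => (GH (γ : Ordinal)).1 x)
      (U : Filter T) (𝓝 (G x)) := fun x =>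
    (((continuous_apply x).comp continuous_fst).tendsto GHl).comp htend
  have htH : ∀ x : A, Filter.Tendsto (fun γ : T => (GH (γ : Ordinal)).2 x)
      (U : Filter T) (𝓝 (H x)) := fun x =>
    (((continuous_apply x).comp continuous_snd).tendsto GHl).comp htend
  have hGadd : ∀ x y : A, G (x + y) = G x + G y := fun x y =>
    tendsto_nhds_unique (htG (x + y))
      (((htG x).add (htG y)).congr (fun γ => ((hprops γ).1.map_add x y).symm))
  have hHadd : ∀ x y : A, H (x + y) = H x + H y := fun x y =>
    tendsto_nhds_unique (htH (x + y))
      (((htH x).add (htH y)).congr (fun γ => ((hprops γ).2.1.map_add x y).symm))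
  have hGsmul : ∀ (c : ℂ) (x : A), G (c • x) = c • G x := fun c x =>
    tendsto_nhds_unique (htG (c • x))
      (((htG x).const_smul c).congr (fun γ => ((hprops γ).1.map_smul c x).symm))
  have hHsmul : ∀ (c : ℂ) (x : A), H (c • x) = c • H x := fun c x =>
    tendsto_nhds_unique (htH (c • x))
      (((htH x).const_smul c).congr (fun γ => ((hprops γ).2.1.map_smul c x).symm))
  have hmem𝒜 : ∀ x : A, ∃ γ0, γ0 < (Cardinal.aleph 1).ord ∧ x ∈ 𝒜 γ0 := by
    intro x
    have hx : x ∈ ⋃ α < (Cardinal.aleph 1).ord, ((𝒜 α : Set A)) := by rw [hunion]; trivial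
    simpa using hx
  have hGpos : ∀ x : A, 0 ≤ G (star x * x) := by
    intro x
    obtain ⟨γ0, hγ0, hxm⟩ := hmem𝒜 x
    have hev : ∀ᶠ γ : T in (U : Filter T),
        (GH (γ : Ordinal)).1 (star x * x) ∈ {z : ℂ | 0 ≤ z} := by
      filter_upwards [htail γ0 hγ0] with γ hγ
      exact (hprops γ).2.2.2.2.1 x (SetLike.le_def.mp (hmono γ0 (γ : Ordinal) hγ γ.2.2.1) hxm)
    exact aux_isClosed_nonneg.mem_of_tendsto (htG (star x * x)) hev
  have hHpos : ∀ x : A, 0 ≤ H (star x * x) := by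
    intro x
    obtain ⟨γ0, hγ0, hxm⟩ := hmem𝒜 x
    have hev : ∀ᶠ γ : T in (U : Filter T),
        (GH (γ : Ordinal)).2 (star x * x) ∈ {z : ℂ | 0 ≤ z} := by
      filter_upwards [htail γ0 hγ0] with γ hγ
      exact (hprops γ).2.2.2.2.2.1 x (SetLike.le_def.mp (hmono γ0 (γ : Ordinal) hγ γ.2.2.1) hxm)
    exact aux_isClosed_nonneg.mem_of_tendsto (htH (star x * x)) hev
  have havgG : ∀ x : A, G x + H x = 2 * f x := by
    intro x
    obtain ⟨γ0, hγ0, hxm⟩ := hmem𝒜 x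
    have hev : (fun _ : T => 2 * f x) =ᶠ[(U : Filter T)]
        (fun γ : T => (GH (γ : Ordinal)).1 x + (GH (γ : Ordinal)).2 x) := by
      filter_upwards [htail γ0 hγ0] with γ hγ
      exact ((hprops γ).2.2.2.2.2.2.1 x (SetLike.le_def.mp (hmono γ0 _ hγ γ.2.2.1) hxm)).symm
    exact tendsto_nhds_unique ((htG x).add (htH x)) (Filter.Tendsto.congr' hev tendsto_const_nhds)
  have hgapl : 1 / ((p.2 : ℝ) + 1) ≤ ‖G (xs p.1) - H (xs p.1)‖ := by
    have hcl : IsClosed {z : ℂ | 1 / ((p.2 : ℝ) + 1) ≤ ‖z‖} :=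
      isClosed_le continuous_const continuous_norm
    exact hcl.mem_of_tendsto ((htG (xs p.1)).sub (htH (xs p.1)))
      (Filter.Eventually.of_forall fun γ => hgap γ)
  have hGc : ∀ x, ‖G x‖ ≤ ‖x‖ := by
    intro x
    have h1 := hGHlC.1 x (Set.mem_univ x)
    simpa [Metric.mem_closedBall, dist_zero_right] using h1
  have hHc : ∀ x, ‖H x‖ ≤ ‖x‖ := by
    intro x
    have h1 := hGHlC.2 x (Set.mem_univ x)
    simpa [Metric.mem_closedBall, dist_zero_right] using h1
  have htwo : ‖(2 : ℂ)‖ = 2 := by norm_num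
  have hGstate : IsState G := by
    refine ⟨⟨hGadd, hGsmul⟩, hGpos, hGc, ?_⟩
    intro ε hε
    obtain ⟨x, hx1, hx2⟩ := hf.1.2.2.2 (ε/2) (half_pos hε)
    refine ⟨x, hx1, ?_⟩
    have e1 : ‖G x + H x‖ = 2 * ‖f x‖ := by rw [havgG x, norm_mul, htwo]
    have e2 : ‖G x + H x‖ ≤ ‖G x‖ + ‖H x‖ := norm_add_le _ _
    have e3 : ‖H x‖ ≤ 1 := (hHc x).trans hx1
    linarith
  have hHstate : IsState H := by
    refine ⟨⟨hHadd, hHsmul⟩, hHpos, hHc, ?_⟩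
    intro ε hε
    obtain ⟨x, hx1, hx2⟩ := hf.1.2.2.2 (ε/2) (half_pos hε)
    refine ⟨x, hx1, ?_⟩
    have e1 : ‖G x + H x‖ = 2 * ‖f x‖ := by rw [havgG x, norm_mul, htwo]
    have e2 : ‖G x + H x‖ ≤ ‖G x‖ + ‖H x‖ := norm_add_le _ _
    have e3 : ‖G x‖ ≤ 1 := (hGc x).trans hx1
    linarith
  have hfeq : ∀ x, f x = (G x + H x) / 2 := by
    intro x; rw [havgG x]; ring
  have hGHeq : G = H := hf.2 G H hGstate hHstate hfeq
  have hpos : (0:ℝ) < 1 / ((p.2 : ℝ) + 1) := by positivity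
  rw [hGHeq, sub_self, norm_zero] at hgapl
  linarith


/- Statement 11 (second half of Lemma 4): let `(A_α)_{α<ω₁}` be a continuous
nested transfinite sequence of separable C*-subalgebras with union the whole
C*-algebra `A`, and let `f` be a pure state on `A`.  Then the set
`{α < ω₁ : f|_{A_α} is a pure state on A_α}` is unbounded in `ω₁`. -/
theorem stmt_11 (𝒜 : Ordinal → NonUnitalStarSubalgebra ℂ A)
    (hclosed : ∀ α, α < (Cardinal.aleph 1).ord → IsClosed (𝒜 α : Set A))
    (hsep : ∀ α, α < (Cardinal.aleph 1).ord →
      TopologicalSpace.SeparableSpace (𝒜 α))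
    (hmono : ∀ β α, β ≤ α → α < (Cardinal.aleph 1).ord → 𝒜 β ≤ 𝒜 α)
    (hcont : ∀ α, α < (Cardinal.aleph 1).ord → Order.IsSuccLimit α →
      (𝒜 α : Set A) = closure (⋃ β < α, (𝒜 β : Set A)))
    (hunion : (⋃ α < (Cardinal.aleph 1).ord, (𝒜 α : Set A)) = Set.univ)
    (f : A → ℂ) (hf : IsPureState f) :
    ∀ α < (Cardinal.aleph 1).ord, ∃ β, β < (Cardinal.aleph 1).ord ∧ α < β ∧
      IsPureState (f ∘ Subtype.val : 𝒜 β → ℂ) := by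
  classical
  intro α hα
  have hkey : ∀ β : Ordinal, ∃ γ : Ordinal, β < (Cardinal.aleph 1).ord →
      (β < γ ∧ γ < (Cardinal.aleph 1).ord ∧
      ∀ G H : A → ℂ, IsLinearMap ℂ G → IsLinearMap ℂ H →
        (∀ x, ‖G x‖ ≤ ‖x‖) → (∀ x, ‖H x‖ ≤ ‖x‖) →
        (∀ x ∈ 𝒜 γ, 0 ≤ G (star x * x)) → (∀ x ∈ 𝒜 γ, 0 ≤ H (star x * x)) →
        (∀ x ∈ 𝒜 γ, G x + H x = 2 * f x) →
        ∀ x ∈ 𝒜 β, G x = H x) := by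
    intro β
    by_cases hβ : β < (Cardinal.aleph 1).ord
    · obtain ⟨γ, h⟩ := aux_key 𝒜 hsep hmono hunion f hf β hβ
      exact ⟨γ, fun _ => h⟩
    · exact ⟨0, fun h => absurd h hβ⟩
  choose Γ hΓ using hkey
  have hw : ∀ n : ℕ, ∃ x : A, ‖x‖ ≤ 1 ∧ 1 - 1/((n:ℝ)+1) < ‖f x‖ := fun n =>
    hf.1.2.2.2 _ (by positivity)
  choose xw hxw1 hxw2 using hw
  have hmemA : ∀ x : A, ∃ μ, μ < (Cardinal.aleph 1).ord ∧ x ∈ 𝒜 μ := by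
    intro x
    have hx : x ∈ ⋃ α < (Cardinal.aleph 1).ord, ((𝒜 α : Set A)) := by rw [hunion]; trivial
    simpa using hx
  choose ν hν1 hν2 using (fun n => hmemA (xw n))
  let b : ℕ → Ordinal := fun n => Nat.rec (α + 1)
    (fun n ih => max (max (Γ ih) (ih + 1)) (ν n + 1)) n
  have hbsucc : ∀ n, b (n+1) = max (max (Γ (b n)) (b n + 1)) (ν n + 1) := fun n => rfl
  have hsucclt : ∀ δ : Ordinal, δ < (Cardinal.aleph 1).ord → δ + 1 < (Cardinal.aleph 1).ord := by
    intro δ h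
    rw [Ordinal.add_one_eq_succ]
    exact aux_omega1_isLimit.succ_lt h
  have hblt : ∀ n, b n < (Cardinal.aleph 1).ord := by
    intro n
    induction n with
    | zero => exact hsucclt α hα
    | succ n ih =>
      rw [hbsucc n]
      exact max_lt (max_lt ((hΓ (b n) ih).2.1) (hsucclt _ ih)) (hsucclt _ (hν1 n))
  have hblt' : ∀ n, b n < b (n+1) := by
    intro n
    rw [hbsucc n]
    refine lt_of_lt_of_le ?_ (le_trans (le_max_right _ _) (le_max_left _ _))
    rw [Ordinal.add_one_eq_succ]; exact Order.lt_succ _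
  obtain ⟨B, hBlt, hBge, hBd⟩ := aux_sup_lt b hblt
  have hb0 : α < b 0 := by
    show α < α + 1
    rw [Ordinal.add_one_eq_succ]; exact Order.lt_succ _
  have hαB : α < B := lt_of_lt_of_le hb0 (hBge 0)
  have hBlim : Order.IsSuccLimit B := by
    refine Ordinal.isSuccLimit_iff.mpr ⟨?_, Order.isSuccPrelimit_of_succ_lt ?_⟩
    · rintro rfl
      exact absurd hαB (not_lt_bot (a := α))
    · intro δ hδ
      obtain ⟨n, hn⟩ := hBd δ hδ
      calc Order.succ δ ≤ b n := Order.succ_le_of_lt hn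
        _ < b (n+1) := hblt' n
        _ ≤ B := hBge (n+1)
  have hsubB : ∀ n, ∀ x, x ∈ 𝒜 (b n) → x ∈ 𝒜 B := fun n x hx =>
    SetLike.le_def.mp (hmono (b n) B (hBge n) hBlt) hx
  have hΓB : ∀ n, Γ (b n) ≤ B := by
    intro n
    have h1 : Γ (b n) ≤ b (n+1) := by
      rw [hbsucc n]; exact le_trans (le_max_left _ _) (le_max_left _ _)
    exact h1.trans (hBge (n+1))
  have hνB : ∀ n, xw n ∈ 𝒜 B := by
    intro n
    have h1 : ν n ≤ B := by
      have h2 : ν n + 1 ≤ b (n+1) := by rw [hbsucc n]; exact le_max_right _ _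
      have h3 : ν n ≤ ν n + 1 := by
        rw [Ordinal.add_one_eq_succ]; exact (Order.lt_succ _).le
      exact h3.trans (h2.trans (hBge (n+1)))
    exact SetLike.le_def.mp (hmono (ν n) B h1 hBlt) (hν2 n)
  have hφstate : IsState (f ∘ Subtype.val : ↥(𝒜 B) → ℂ) := by
    refine ⟨⟨?_, ?_⟩, ?_, ?_, ?_⟩
    · intro X Y
      show f ((X + Y : ↥(𝒜 B)) : A) = f (X : A) + f (Y : A)
      rw [show ((X + Y : ↥(𝒜 B)) : A) = (X : A) + (Y : A) from rfl, hf.1.1.map_add]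
    · intro c X
      show f ((c • X : ↥(𝒜 B)) : A) = c • f (X : A)
      rw [show ((c • X : ↥(𝒜 B)) : A) = c • (X : A) from rfl, hf.1.1.map_smul]
    · intro X
      show 0 ≤ f ((star X * X : ↥(𝒜 B)) : A)
      rw [show ((star X * X : ↥(𝒜 B)) : A) = star (X : A) * (X : A) from rfl]
      exact hf.1.2.1 (X : A)
    · intro X
      exact hf.1.2.2.1 (X : A)
    · intro ε hε
      obtain ⟨n, hn⟩ := exists_nat_one_div_lt hε
      refine ⟨⟨xw n, hνB n⟩, ?_, ?_⟩
      · show ‖xw n‖ ≤ 1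
        exact hxw1 n
      · show 1 - ε < ‖f (xw n)‖
        have h1 := hxw2 n
        linarith
  refine ⟨B, hBlt, hαB, hφstate, ?_⟩
  intro g h hgs hhs havg
  let psub : Submodule ℂ A := ((𝒜 B).toNonUnitalSubalgebra).toSubmodule
  have hmemP : ∀ x : A, x ∈ psub ↔ x ∈ 𝒜 B := fun x => Iff.rfl
  let ι : psub → ↥(𝒜 B) := fun y => ⟨y.1, (hmemP _).mp y.2⟩
  have hι_add : ∀ a b : psub, ι (a + b) = ι a + ι b := fun a b => Subtype.ext rfl
  have hι_smul : ∀ (c : ℂ) (a : psub), ι (c • a) = c • ι a := fun c a => Subtype.ext rfl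
  have hι_norm : ∀ a : psub, ‖ι a‖ = ‖a‖ := fun a => rfl
  let gLM : psub →ₗ[ℂ] ℂ :=
    { toFun := fun y => g (ι y)
      map_add' := fun a b => by
        show g (ι (a + b)) = g (ι a) + g (ι b)
        rw [hι_add, hgs.1.map_add]
      map_smul' := fun c a => by
        show g (ι (c • a)) = (RingHom.id ℂ) c • g (ι a)
        rw [hι_smul, hgs.1.map_smul]; rfl }
  let hLM : psub →ₗ[ℂ] ℂ :=
    { toFun := fun y => h (ι y)
      map_add' := fun a b => by
        show h (ι (a + b)) = h (ι a) + h (ι b)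
        rw [hι_add, hhs.1.map_add]
      map_smul' := fun c a => by
        show h (ι (c • a)) = (RingHom.id ℂ) c • h (ι a)
        rw [hι_smul, hhs.1.map_smul]; rfl }
  let gCL : psub →L[ℂ] ℂ := gLM.mkContinuous 1 (fun y => by
    rw [one_mul]
    calc ‖gLM y‖ = ‖g (ι y)‖ := rfl
      _ ≤ ‖ι y‖ := hgs.2.2.1 (ι y)
      _ = ‖y‖ := hι_norm y)
  let hCL : psub →L[ℂ] ℂ := hLM.mkContinuous 1 (fun y => by
    rw [one_mul]
    calc ‖hLM y‖ = ‖h (ι y)‖ := rfl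
      _ ≤ ‖ι y‖ := hhs.2.2.1 (ι y)
      _ = ‖y‖ := hι_norm y)
  obtain ⟨Ge, hGe, hGen⟩ := exists_extension_norm_eq psub gCL
  obtain ⟨He, hHe, hHen⟩ := exists_extension_norm_eq psub hCL
  have hGec : ∀ x : A, ‖Ge x‖ ≤ ‖x‖ := by
    intro x
    calc ‖Ge x‖ ≤ ‖Ge‖ * ‖x‖ := Ge.le_opNorm x
      _ ≤ 1 * ‖x‖ := by
        apply mul_le_mul_of_nonneg_right _ (norm_nonneg x)
        rw [hGen]
        exact LinearMap.mkContinuous_norm_le gLM zero_le_one _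
      _ = ‖x‖ := one_mul _
  have hHec : ∀ x : A, ‖He x‖ ≤ ‖x‖ := by
    intro x
    calc ‖He x‖ ≤ ‖He‖ * ‖x‖ := He.le_opNorm x
      _ ≤ 1 * ‖x‖ := by
        apply mul_le_mul_of_nonneg_right _ (norm_nonneg x)
        rw [hHen]
        exact LinearMap.mkContinuous_norm_le hLM zero_le_one _
      _ = ‖x‖ := one_mul _
  have hGeval : ∀ (x : A) (hx : x ∈ 𝒜 B), Ge x = g ⟨x, hx⟩ := by
    intro x hx
    exact hGe ⟨x, (hmemP x).mpr hx⟩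
  have hHeval : ∀ (x : A) (hx : x ∈ 𝒜 B), He x = h ⟨x, hx⟩ := by
    intro x hx
    exact hHe ⟨x, (hmemP x).mpr hx⟩
  have hagree : ∀ n, ∀ x ∈ 𝒜 (b n), Ge x = He x := by
    intro n
    refine (hΓ (b n) (hblt n)).2.2 Ge He
      ⟨fun x y => Ge.map_add x y, fun c x => Ge.map_smul c x⟩
      ⟨fun x y => He.map_add x y, fun c x => He.map_smul c x⟩
      hGec hHec ?_ ?_ ?_
    · intro x hx
      have hxB : x ∈ 𝒜 B := SetLike.le_def.mp (hmono _ B (hΓB n) hBlt) hx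
      have hxxB : star x * x ∈ 𝒜 B := mul_mem (star_mem hxB) hxB
      rw [hGeval _ hxxB]
      have h2 := hgs.2.1 ⟨x, hxB⟩
      have e : (star (⟨x, hxB⟩ : ↥(𝒜 B)) * ⟨x, hxB⟩) = (⟨star x * x, hxxB⟩ : ↥(𝒜 B)) :=
        Subtype.ext rfl
      rwa [e] at h2
    · intro x hx
      have hxB : x ∈ 𝒜 B := SetLike.le_def.mp (hmono _ B (hΓB n) hBlt) hx
      have hxxB : star x * x ∈ 𝒜 B := mul_mem (star_mem hxB) hxB
      rw [hHeval _ hxxB]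
      have h2 := hhs.2.1 ⟨x, hxB⟩
      have e : (star (⟨x, hxB⟩ : ↥(𝒜 B)) * ⟨x, hxB⟩) = (⟨star x * x, hxxB⟩ : ↥(𝒜 B)) :=
        Subtype.ext rfl
      rwa [e] at h2
    · intro x hx
      have hxB : x ∈ 𝒜 B := SetLike.le_def.mp (hmono _ B (hΓB n) hBlt) hx
      rw [hGeval _ hxB, hHeval _ hxB]
      have h3 : f x = (g ⟨x, hxB⟩ + h ⟨x, hxB⟩) / 2 := havg ⟨x, hxB⟩
      rw [h3]; ring
  have hDsub : (⋃ n, (𝒜 (b n) : Set A)) ⊆ (𝒜 B : Set A) := by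
    rintro x hx
    obtain ⟨n, hn⟩ : ∃ n, x ∈ 𝒜 (b n) := by simpa using hx
    exact hsubB n x hn
  have hUeq : (⋃ β' < B, (𝒜 β' : Set A)) = ⋃ n, (𝒜 (b n) : Set A) := by
    ext x
    simp only [Set.mem_iUnion, exists_prop]
    constructor
    · rintro ⟨β', hβ', hx⟩
      obtain ⟨n, hn⟩ := hBd β' hβ'
      exact ⟨n, SetLike.le_def.mp (hmono β' (b n) hn.le (hblt n)) hx⟩
    · rintro ⟨n, hx⟩
      exact ⟨b n, lt_of_lt_of_le (hblt' n) (hBge (n+1)), hx⟩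
  have hDset : (𝒜 B : Set A) = closure (⋃ n, (𝒜 (b n) : Set A)) := by
    rw [hcont B hBlt hBlim, hUeq]
  have hdense : Dense (Subtype.val ⁻¹' (⋃ n, (𝒜 (b n) : Set A)) : Set ↥(𝒜 B)) := by
    rw [dense_iff_closure_eq]
    have hind : Topology.IsInducing (Subtype.val : ↥(𝒜 B) → A) := ⟨rfl⟩
    rw [hind.closure_eq_preimage_closure_image, Set.image_preimage_eq_inter_range,
      Subtype.range_coe_subtype]
    have : (⋃ n, (𝒜 (b n) : Set A)) ∩ {x | x ∈ 𝒜 B} = ⋃ n, (𝒜 (b n) : Set A) :=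
      Set.inter_eq_self_of_subset_left hDsub
    rw [this, ← hDset]
    exact Set.eq_univ_of_forall (fun X => X.2)
  have hcg : Continuous (g : ↥(𝒜 B) → ℂ) := aux_cont hgs.1 hgs.2.2.1
  have hch : Continuous (h : ↥(𝒜 B) → ℂ) := aux_cont hhs.1 hhs.2.2.1
  refine Continuous.ext_on hdense hcg hch ?_
  intro X hX
  obtain ⟨n, hXn⟩ : ∃ n, (X : A) ∈ 𝒜 (b n) := by simpa using hX
  have h1 := hagree n (X : A) hXn
  rw [hGeval _ X.2, hHeval _ X.2] at h1
  simpa using h1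

end
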